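/- arXiv:0712.0282 — 3 statements merged into one kernel-verified Lean document; each statement's English description precedes it below -/
import Mathlib

section
/- In the quantum Heisenberg algebra H = U_q^+(sl_3), with E3 = −E1E2 + q⁻¹E2E1 and E3' = −E2E1 + q⁻¹E1E2, the element Ω = E3·E3' is central in H. -/
noncomputable section

open FreeAlgebra

/-- The quantum Serre relations of type A₂ defining `U_q⁺(sl₃)`. -/
inductive sl3Rel (q : ℂ) : FreeAlgebra ℂ (Fin 2) → FreeAlgebra ℂ (Fin 2) → Prop
  | serre1 : sl3Rel q
      (ι ℂ 0 * ι ℂ 0 * ι ℂ 1 - (q + q⁻¹) • (ι ℂ 0 * ι ℂ 1 * ι ℂ 0) + ι ℂ 1 * ι ℂ 0 * ι ℂ 0) 0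
  | serre2 : sl3Rel q
      (ι ℂ 1 * ι ℂ 1 * ι ℂ 0 - (q + q⁻¹) • (ι ℂ 1 * ι ℂ 0 * ι ℂ 1) + ι ℂ 0 * ι ℂ 1 * ι ℂ 1) 0

/-- `U_q⁺(sl₃)`, the quantum Heisenberg algebra. -/
abbrev Uqsl3 (q : ℂ) := RingQuot (sl3Rel q)

def E₁ (q : ℂ) : Uqsl3 q := RingQuot.mkAlgHom ℂ (sl3Rel q) (ι ℂ 0)
def E₂ (q : ℂ) : Uqsl3 q := RingQuot.mkAlgHom ℂ (sl3Rel q) (ι ℂ 1)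

/-!
Writing `E3 = qComm q E₁ E₂` and `E3' = qComm q E₂ E₁`, the Serre relations give the
`q`-commutation rules `E3 E₁ = q⁻¹ E₁ E3`, `E3' E₁ = q E₁ E3'`, `E3 E₂ = q E₂ E3`,
`E3' E₂ = q⁻¹ E₂ E3'`. The scalars cancel in the product `Ω = E3 E3'`, so `Ω` commutes with both
generators and hence with all of `U_q⁺(sl₃)`.
-/

def qComm {K R : Type*} [Field K] [Ring R] [Algebra K R] (q : K) (A B : R) : R :=
  -(A * B) + q⁻¹ • (B * A)

def IsQSerre {K R : Type*} [Field K] [Ring R] [Algebra K R] (q : K) (A B : R) : Prop :=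
  A * A * B - (q + q⁻¹) • (A * B * A) + B * A * A = 0

section QCommutation

variable {K R : Type*} [Field K] [Ring R] [Algebra K R] {q : K} {A B : R}

lemma IsQSerre.mul_mul_self_eq (h : IsQSerre q A B) :
    B * A * A = (q + q⁻¹) • (A * B * A) - A * A * B := by
  rw [← sub_eq_zero, ← h]; noncomm_ring

lemma IsQSerre.qComm_mul (hq : q ≠ 0) (h : IsQSerre q A B) :
    qComm q A B * A = q⁻¹ • (A * qComm q A B) := by
  simp only [qComm, mul_add, add_mul, mul_neg, neg_mul, mul_smul_comm, smul_mul_assoc,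
    smul_add, smul_neg, smul_smul, ← mul_assoc, h.mul_mul_self_eq]
  match_scalars <;> grind

lemma IsQSerre.qComm_swap_mul (hq : q ≠ 0) (h : IsQSerre q A B) :
    qComm q B A * A = q • (A * qComm q B A) := by
  simp only [qComm, mul_add, add_mul, mul_neg, neg_mul, mul_smul_comm, smul_mul_assoc,
    smul_add, smul_neg, smul_smul, ← mul_assoc, h.mul_mul_self_eq]
  match_scalars <;> grind

lemma commute_mul_of_smul_commute {c : K} (hc : c ≠ 0) {X Y : R}
    (hX : X * A = c • (A * X)) (hY : Y * A = c⁻¹ • (A * Y)) : Commute (X * Y) A := by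
  rw [Commute, SemiconjBy, mul_assoc, hY, mul_smul_comm, ← mul_assoc, hX, smul_mul_assoc,
    smul_smul, inv_mul_cancel₀ hc, one_smul, mul_assoc]

lemma IsQSerre.commute_qComm_mul_qComm_left (hq : q ≠ 0) (h : IsQSerre q A B) :
    Commute (qComm q A B * qComm q B A) A :=
  commute_mul_of_smul_commute (inv_ne_zero hq) (h.qComm_mul hq)
    (by rw [inv_inv]; exact h.qComm_swap_mul hq)

lemma IsQSerre.commute_qComm_mul_qComm_right (hq : q ≠ 0) (h : IsQSerre q B A) :
    Commute (qComm q A B * qComm q B A) B :=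
  commute_mul_of_smul_commute hq (h.qComm_swap_mul hq) (h.qComm_mul hq)

end QCommutation

lemma RingQuot.commute_of_commute_mkAlgHom_ι {S X : Type*} [CommSemiring S]
    {r : FreeAlgebra S X → FreeAlgebra S X → Prop}
    {z : RingQuot r} (h : ∀ i, Commute z (RingQuot.mkAlgHom S r (ι S i))) (x : RingQuot r) :
    Commute z x := by
  obtain ⟨y, rfl⟩ := RingQuot.mkAlgHom_surjective S r x
  induction y using FreeAlgebra.induction with
  | grade0 c => rw [AlgHom.commutes]; exact Algebra.commute_algebraMap_right c z
  | grade1 i => exact h i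
  | mul a b ha hb => rw [map_mul]; exact ha.mul_right hb
  | add a b ha hb => rw [map_add]; exact ha.add_right hb

lemma isQSerre_E₁_E₂ (q : ℂ) : IsQSerre q (E₁ q) (E₂ q) := by
  simpa [IsQSerre, E₁, E₂] using RingQuot.mkAlgHom_rel ℂ (sl3Rel.serre1 (q := q))

lemma isQSerre_E₂_E₁ (q : ℂ) : IsQSerre q (E₂ q) (E₁ q) := by
  simpa [IsQSerre, E₁, E₂] using RingQuot.mkAlgHom_rel ℂ (sl3Rel.serre2 (q := q))

theorem stmt2_general (q : ℂ) (hq : q ≠ 0)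
    (E3 E3' Ω : Uqsl3 q)
    (hE3 : E3 = -(E₁ q * E₂ q) + q⁻¹ • (E₂ q * E₁ q))
    (hE3' : E3' = -(E₂ q * E₁ q) + q⁻¹ • (E₁ q * E₂ q))
    (hΩ : Ω = E3 * E3') :
    ∀ x : Uqsl3 q, Ω * x = x * Ω := by
  subst hΩ hE3 hE3'
  refine RingQuot.commute_of_commute_mkAlgHom_ι fun i => ?_
  fin_cases i
  · exact (isQSerre_E₁_E₂ q).commute_qComm_mul_qComm_left hq
  · exact (isQSerre_E₂_E₁ q).commute_qComm_mul_qComm_right hq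

theorem stmt2 (q : ℂ) (hq : q ≠ 0) (hq' : ∀ n : ℕ, 0 < n → q ^ n ≠ 1)
    (E3 E3' Ω : Uqsl3 q)
    (hE3 : E3 = -(E₁ q * E₂ q) + q⁻¹ • (E₂ q * E₁ q))
    (hE3' : E3' = -(E₂ q * E₁ q) + q⁻¹ • (E₁ q * E₂ q))
    (hΩ : Ω = E3 * E3') :
    ∀ x : Uqsl3 q, Ω * x = x * Ω :=
  stmt2_general q hq E3 E3' Ω hE3 hE3' hΩ
end
end

section
/- Let A = ⊕_{i∈ℕ} A_i be an ℕ-graded ℂ-algebra that is a domain with A_0 = ℂ, generated by A_1, and suppose that for each generator x_i of A_1 there exist 0 ≠ a ∈ A homogeneous and a scalar λ ≠ 1 with x_i a = λ a x_i. Then every ℂ-algebra automorphism σ of A does not decrease degrees: for x a nonzero homogeneous element of degree d, σ(x) = y_d + y_{>d} with y_d ∈ A_d nonzero and y_{>d} ∈ ⊕_{i≥d+1} A_i. -/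
/-!
Filter `A` by the submodules `degGE 𝒜 e` of elements all of whose homogeneous components have
degree at least `e`; this is a multiplicative filtration. If `x a = λ a x` with `a ≠ 0` and
`λ ≠ 1`, the same relation holds for `u = σ x` and `w = σ a`. Writing `u = c + u'` with `c` a
scalar and `u'` of positive degree, it becomes `(1 - λ) c w = λ w u' - u' w`, whose right-hand side
lies one step deeper in the filtration than `w`; so `c ≠ 0` would force `w = 0`. Hence `σ` maps
`A_1` into `degGE 𝒜 1`, and since `A_1` generates, `σ` maps every `degGE 𝒜 e` into itself. The
same holds for `σ⁻¹`, so the degree-`d` component of `σ z` cannot vanish for `0 ≠ z ∈ A_d`.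
-/

open DirectSum GradedAlgebra

theorem Submodule.iSup_pow_mul_iSup_pow_le {R A : Type*} [CommSemiring R] [Semiring A]
    [Algebra R A] (M : Submodule R A) :
    (⨆ i : ℕ, M ^ i) * (⨆ j : ℕ, M ^ j) ≤ ⨆ k : ℕ, M ^ k := by
  simp only [Submodule.iSup_mul, Submodule.mul_iSup, ← pow_add]
  exact iSup₂_le fun i j => le_iSup (M ^ ·) (j + i)

theorem Algebra.adjoin_toSubmodule_le_iSup_pow {R A : Type*} [CommSemiring R] [Semiring A]
    [Algebra R A] (M : Submodule R A) :
    Subalgebra.toSubmodule (Algebra.adjoin R (M : Set A)) ≤ ⨆ k : ℕ, M ^ k := by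
  rw [Algebra.adjoin_toSubmodule_le]
  intro z hz
  induction hz using Submonoid.closure_induction with
  | mem z hz => exact Submodule.mem_iSup_of_mem 1 (by simpa using hz)
  | one => exact Submodule.mem_iSup_of_mem 0 (pow_zero M ▸ Submodule.one_le.mp le_rfl)
  | mul a b _ _ ha hb => exact M.iSup_pow_mul_iSup_pow_le (Submodule.mul_mem_mul ha hb)

namespace GradedAlgebra

section Semiring

variable {R A : Type*} [CommSemiring R] [Semiring A] [Algebra R A]

def degGE (𝒜 : ℕ → Submodule R A) (e : ℕ) : Submodule R A := ⨆ i, ⨆ _ : e ≤ i, 𝒜 i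

variable {𝒜 : ℕ → Submodule R A}

theorem le_degGE {e i : ℕ} (h : e ≤ i) : 𝒜 i ≤ degGE 𝒜 e :=
  le_iSup₂_of_le i h le_rfl

theorem degGE_anti {e f : ℕ} (h : e ≤ f) : degGE 𝒜 f ≤ degGE 𝒜 e :=
  iSup₂_le fun _ hi => le_degGE (h.trans hi)

variable [GradedAlgebra 𝒜]

theorem grade_mul_grade_le (i j : ℕ) : 𝒜 i * 𝒜 j ≤ 𝒜 (i + j) :=
  Submodule.mul_le.mpr fun _ ha _ hb => SetLike.mul_mem_graded ha hb

theorem grade_one_pow_le (k : ℕ) : 𝒜 1 ^ k ≤ 𝒜 k := by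
  induction k with
  | zero => exact Submodule.one_le.mpr (SetLike.one_mem_graded 𝒜)
  | succ k ih => rw [pow_succ]; exact (mul_le_mul' ih le_rfl).trans (grade_mul_grade_le k 1)

theorem proj_mem_of_mem_iSup {P : ℕ → Submodule R A} (hP : ∀ k, P k ≤ 𝒜 k) {z : A}
    (hz : z ∈ ⨆ k, P k) (d : ℕ) : proj 𝒜 d z ∈ P d := by
  suffices (⨆ k, P k).map (proj 𝒜 d) ≤ P d from this (Submodule.mem_map_of_mem hz)
  rw [Submodule.map_iSup]
  refine iSup_le fun k => ?_
  rintro _ ⟨v, hv, rfl⟩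
  by_cases hkd : k = d
  · subst hkd
    rwa [proj_apply, decompose_of_mem_same 𝒜 (hP k hv)]
  · rw [proj_apply, decompose_of_mem_ne 𝒜 (hP k hv) hkd]
    exact zero_mem _

theorem le_grade_one_pow_of_adjoin_eq_top (hgen : Algebra.adjoin R (𝒜 1 : Set A) = ⊤)
    (d : ℕ) : 𝒜 d ≤ 𝒜 1 ^ d := fun z hz => by
  have hz' : z ∈ ⨆ k : ℕ, 𝒜 1 ^ k :=
    Algebra.adjoin_toSubmodule_le_iSup_pow (𝒜 1) (by simp [hgen])
  simpa [proj_apply, decompose_of_mem_same 𝒜 hz] using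
    proj_mem_of_mem_iSup grade_one_pow_le hz' d

theorem mem_degGE_iff {e : ℕ} {u : A} : u ∈ degGE 𝒜 e ↔ ∀ k < e, proj 𝒜 k u = 0 := by
  classical
  constructor
  · intro hu k hk
    have : degGE 𝒜 e ≤ LinearMap.ker (proj 𝒜 k) := iSup₂_le fun i hi v hv => by
      simp [proj_apply, decompose_of_mem_ne 𝒜 hv (by omega : i ≠ k)]
    exact this hu
  · intro h
    rw [← sum_support_decompose 𝒜 u]
    refine Submodule.sum_mem _ fun k hk => le_degGE ?_ (decompose 𝒜 u k).2
    by_contra! hlt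
    exact DFinsupp.mem_support_iff.mp hk (Subtype.ext (by simpa [proj_apply] using h k hlt))

theorem degGE_zero : degGE 𝒜 0 = ⊤ :=
  eq_top_iff.mpr fun _ _ => mem_degGE_iff.mpr fun k hk => absurd hk k.not_lt_zero

theorem eq_zero_of_forall_mem_degGE {u : A} (h : ∀ e, u ∈ degGE 𝒜 e) : u = 0 := by
  classical
  rw [← sum_support_decompose 𝒜 u]
  refine Finset.sum_eq_zero fun k _ => ?_
  simpa [proj_apply] using mem_degGE_iff.mp (h (k + 1)) k k.lt_succ_self

theorem eq_zero_of_mem_of_mem_degGE {d e : ℕ} {u : A} (hde : d < e) (hu : u ∈ 𝒜 d)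
    (h : u ∈ degGE 𝒜 e) : u = 0 := by
  simpa [proj_apply, decompose_of_mem_same 𝒜 hu] using mem_degGE_iff.mp h d hde

theorem degGE_mul_le (e f : ℕ) : degGE 𝒜 e * degGE 𝒜 f ≤ degGE 𝒜 (e + f) := by
  simp only [degGE, Submodule.iSup_mul, Submodule.mul_iSup]
  exact iSup₂_le fun j hj => iSup₂_le fun i hi =>
    (grade_mul_grade_le i j).trans (le_degGE (by omega))

theorem mul_mem_degGE {e f : ℕ} {u v : A} (hu : u ∈ degGE 𝒜 e) (hv : v ∈ degGE 𝒜 f) :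
    u * v ∈ degGE 𝒜 (e + f) :=
  degGE_mul_le e f (Submodule.mul_mem_mul hu hv)

theorem degGE_one_pow_le (k : ℕ) : degGE 𝒜 1 ^ k ≤ degGE 𝒜 k := by
  induction k with
  | zero => exact Submodule.one_le.mpr (le_degGE le_rfl (SetLike.one_mem_graded 𝒜))
  | succ k ih => rw [pow_succ]; exact (mul_le_mul' ih le_rfl).trans (degGE_mul_le k 1)

theorem map_mem_degGE (τ : A →ₐ[R] A) (hτ : ∀ v ∈ 𝒜 1, τ v ∈ degGE 𝒜 1)
    (hgen : Algebra.adjoin R (𝒜 1 : Set A) = ⊤) {e : ℕ} {u : A} (hu : u ∈ degGE 𝒜 e) :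
    τ u ∈ degGE 𝒜 e := by
  suffices (degGE 𝒜 e).map τ.toLinearMap ≤ degGE 𝒜 e from
    this (Submodule.mem_map_of_mem hu)
  simp only [degGE, Submodule.map_iSup]
  refine iSup₂_le fun i hi => ?_
  calc (𝒜 i).map τ.toLinearMap
      ≤ (𝒜 1 ^ i).map τ.toLinearMap :=
        Submodule.map_mono (le_grade_one_pow_of_adjoin_eq_top hgen i)
    _ = (𝒜 1).map τ.toLinearMap ^ i := Submodule.map_pow _ τ i
    _ ≤ degGE 𝒜 1 ^ i := pow_le_pow_left' (Submodule.map_le_iff_le_comap.mpr hτ) i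
    _ ≤ degGE 𝒜 i := degGE_one_pow_le i
    _ ≤ degGE 𝒜 e := degGE_anti hi

end Semiring

section Ring

variable {R A : Type*} [CommSemiring R] [Ring A] [Algebra R A]
  {𝒜 : ℕ → Submodule R A} [GradedAlgebra 𝒜]

theorem sub_proj_mem_degGE_succ {d : ℕ} {u : A} (hu : u ∈ degGE 𝒜 d) :
    u - proj 𝒜 d u ∈ degGE 𝒜 (d + 1) := by
  rw [mem_degGE_iff] at hu ⊢
  intro k hk
  have hproj : proj 𝒜 d u ∈ 𝒜 d := by simp [proj_apply]
  rw [map_sub]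
  rcases (Nat.lt_succ_iff.mp hk).lt_or_eq with hkd | rfl
  · rw [hu k hkd, proj_apply, decompose_of_mem_ne 𝒜 hproj hkd.ne', sub_zero]
  · rw [proj_apply 𝒜 k (proj 𝒜 k u), decompose_of_mem_same 𝒜 hproj, proj_apply, sub_self]

end Ring

theorem proj_zero_eq_zero_of_mul_eq_smul_mul {K A : Type*} [Field K] [Ring A] [Algebra K A]
    {𝒜 : ℕ → Submodule K A} [GradedAlgebra 𝒜]
    (hconn : (𝒜 0 : Set A) = Set.range (algebraMap K A)) {u w : A} (hw : w ≠ 0) {lam : K}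
    (hlam : lam ≠ 1) (h : u * w = lam • (w * u)) : proj 𝒜 0 u = 0 := by
  obtain ⟨c, hc⟩ : proj 𝒜 0 u ∈ Set.range (algebraMap K A) :=
    hconn ▸ by simp [proj_apply]
  set u' := u - proj 𝒜 0 u
  have hu' : u' ∈ degGE 𝒜 1 := sub_proj_mem_degGE_succ (by simp [degGE_zero])
  have key : ((1 - lam) * c) • w = lam • (w * u') - u' * w := by
    have hu : u = algebraMap K A c + u' := by rw [hc]; exact (add_sub_cancel _ _).symm
    rw [hu, add_mul, mul_add, ← Algebra.commutes, ← Algebra.smul_def] at h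
    linear_combination (norm := module) h
  rw [← hc]
  convert map_zero (algebraMap K A)
  by_contra hc0
  have hμ : (1 - lam) * c ≠ 0 := mul_ne_zero (sub_ne_zero.mpr hlam.symm) hc0
  refine hw (eq_zero_of_forall_mem_degGE (𝒜 := 𝒜) fun e => ?_)
  induction e with
  | zero => rw [degGE_zero]; exact Submodule.mem_top
  | succ e ih =>
    rw [← inv_smul_smul₀ hμ w, key]
    refine Submodule.smul_mem _ _ (sub_mem (Submodule.smul_mem _ _ (mul_mem_degGE ih hu')) ?_)
    simpa [add_comm] using mul_mem_degGE hu' ih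

end GradedAlgebra

theorem stmt5_general (A : Type*) [Ring A] [Algebra ℂ A]
    (𝒜 : ℕ → Submodule ℂ A) (hgr : GradedAlgebra 𝒜)
    (hconn : (𝒜 0 : Set A) = Set.range (algebraMap ℂ A))
    (hgen : Algebra.adjoin ℂ (𝒜 1 : Set A) = ⊤)
    (n : ℕ) (x : Fin n → A)
    (hspan : Submodule.span ℂ (Set.range x) = 𝒜 1)
    (hqcomm : ∀ i, ∃ d : ℕ, ∃ a ∈ 𝒜 d, a ≠ 0 ∧
      ∃ lam : ℂ, lam ≠ 1 ∧ x i * a = lam • (a * x i)) :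
    ∀ σ : A ≃ₐ[ℂ] A, ∀ d : ℕ, ∀ z ∈ 𝒜 d, z ≠ 0 →
      ∃ y ∈ 𝒜 d, y ≠ 0 ∧ σ z - y ∈ (⨆ i : ℕ, ⨆ _ : d < i, 𝒜 i) := by
  have hdeg1 (τ : A ≃ₐ[ℂ] A) : ∀ v ∈ 𝒜 1, τ v ∈ degGE 𝒜 1 := by
    suffices 𝒜 1 ≤ (degGE 𝒜 1).comap τ.toLinearMap from fun v hv => this hv
    rw [← hspan, Submodule.span_le]
    rintro _ ⟨i, rfl⟩
    obtain ⟨-, a, -, ha, lam, hlam, hrel⟩ := hqcomm i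
    refine mem_degGE_iff.mpr fun k hk => ?_
    rw [Nat.lt_one_iff.mp hk]
    exact proj_zero_eq_zero_of_mul_eq_smul_mul hconn ((map_ne_zero_iff τ τ.injective).mpr ha)
      hlam (by simpa using congrArg τ hrel)
  have hmap (τ : A ≃ₐ[ℂ] A) {e : ℕ} {u : A} (hu : u ∈ degGE 𝒜 e) :
      τ u ∈ degGE 𝒜 e :=
    map_mem_degGE (τ : A →ₐ[ℂ] A) (hdeg1 τ) hgen hu
  intro σ d z hz hz0
  have hσz : σ z ∈ degGE 𝒜 d := hmap σ (le_degGE le_rfl hz)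
  -- `d < i` unfolds to `d + 1 ≤ i`, so `degGE 𝒜 (d + 1)` is the target submodule.
  have hrest := sub_proj_mem_degGE_succ hσz
  refine ⟨proj 𝒜 d (σ z), by simp [proj_apply], fun hy => hz0 ?_, hrest⟩
  rw [hy, sub_zero] at hrest
  exact eq_zero_of_mem_of_mem_degGE d.lt_succ_self hz (by simpa using hmap σ.symm hrest)

/-- Automorphisms of a connected `ℕ`-graded `ℂ`-algebra domain with enough `q`-commutation
relations do not decrease degrees. -/
theorem stmt5 (A : Type*) [Ring A] [IsDomain A] [Algebra ℂ A]
    (𝒜 : ℕ → Submodule ℂ A) (hgr : GradedAlgebra 𝒜)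
    (hconn : (𝒜 0 : Set A) = Set.range (algebraMap ℂ A))
    (hgen : Algebra.adjoin ℂ (𝒜 1 : Set A) = ⊤)
    (n : ℕ) (x : Fin n → A) (hx : ∀ i, x i ∈ 𝒜 1)
    (hspan : Submodule.span ℂ (Set.range x) = 𝒜 1)
    (hqcomm : ∀ i, ∃ d : ℕ, ∃ a ∈ 𝒜 d, a ≠ 0 ∧
      ∃ lam : ℂ, lam ≠ 1 ∧ x i * a = lam • (a * x i)) :
    ∀ σ : A ≃ₐ[ℂ] A, ∀ d : ℕ, ∀ z ∈ 𝒜 d, z ≠ 0 →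
      ∃ y ∈ 𝒜 d, y ≠ 0 ∧ σ z - y ∈ (⨆ i : ℕ, ⨆ _ : d < i, 𝒜 i) :=
  stmt5_general A 𝒜 hgr hconn hgen n x hspan hqcomm
end

section
/- Let H = U_q^+(sl_3) and let σ be a ℂ-algebra automorphism of H such that σ(E1) = a1E1 + a2E2 and σ(E2) = b1E1 + b2E2 for scalars a1,a2,b1,b2 ∈ ℂ, and σ(E3) = λE3 for some λ ∈ ℂ*, where E3 = −E1E2 + q⁻¹E2E1. Then a2 = 0 and b1 = 0 (so σ(E1) = a1E1 and σ(E2) = b2E2 with a1, b2 ∈ ℂ*). -/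
noncomputable section

open FreeAlgebra

/-- strictly upper triangular matrix with x at (0,1), y at (1,2) -/
def mUT (x y : ℂ) : Matrix (Fin 3) (Fin 3) ℂ := !![0, x, 0; 0, 0, y; 0, 0, 0]

lemma mUT_mul (a b c d : ℂ) : mUT a b * mUT c d = !![0, 0, a*d; 0, 0, 0; 0, 0, 0] := by
  simp only [mUT, Matrix.mul_fin_three]
  norm_num

lemma mUT_mul3 (a b c d e f : ℂ) : mUT a b * mUT c d * mUT e f = 0 := by
  rw [mUT_mul, show mUT e f = !![0, e, 0; 0, 0, f; 0, 0, 0] from rfl, Matrix.mul_fin_three]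
  norm_num
  ext i j
  fin_cases i <;> fin_cases j <;> simp [Matrix.vecHead, Matrix.vecTail]

lemma mUT_smul (a x y : ℂ) : a • mUT x y = mUT (a*x) (a*y) := by
  ext i j
  fin_cases i <;> fin_cases j <;> simp [mUT, Matrix.vecHead, Matrix.vecTail]

lemma mUT_add (x y z w : ℂ) : mUT x y + mUT z w = mUT (x+z) (y+w) := by
  ext i j
  fin_cases i <;> fin_cases j <;> simp [mUT, Matrix.vecHead, Matrix.vecTail]

def toMat (q x1 y1 x2 y2 : ℂ) : Uqsl3 q →ₐ[ℂ] Matrix (Fin 3) (Fin 3) ℂ :=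
  RingQuot.liftAlgHom ℂ ⟨FreeAlgebra.lift ℂ (fun i => if i = 0 then mUT x1 y1 else mUT x2 y2),
    by
      intro a b h
      induction h <;>
        simp [mUT_mul3, smul_zero]⟩

lemma toMat_E1 (q x1 y1 x2 y2 : ℂ) : toMat q x1 y1 x2 y2 (E₁ q) = mUT x1 y1 := by
  simp [toMat, E₁, RingQuot.liftAlgHom_mkAlgHom_apply]

lemma toMat_E2 (q x1 y1 x2 y2 : ℂ) : toMat q x1 y1 x2 y2 (E₂ q) = mUT x2 y2 := by
  simp [toMat, E₂, RingQuot.liftAlgHom_mkAlgHom_apply]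

lemma detect (q x1 y1 x2 y2 a1 a2 b1 b2 lam : ℂ)
    (key : -((a1 • E₁ q + a2 • E₂ q) * (b1 • E₁ q + b2 • E₂ q))
        + q⁻¹ • ((b1 • E₁ q + b2 • E₂ q) * (a1 • E₁ q + a2 • E₂ q))
        = lam • (-(E₁ q * E₂ q) + q⁻¹ • (E₂ q * E₁ q))) :
    -((a1*x1+a2*x2)*(b1*y1+b2*y2)) + q⁻¹*((b1*x1+b2*x2)*(a1*y1+a2*y2))
      = lam*(-(x1*y2) + q⁻¹*(x2*y1)) := by
  have h := congrArg (fun z => (toMat q x1 y1 x2 y2) z 0 2) key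
  simp only [map_add, map_neg, map_mul, map_smul, toMat_E1, toMat_E2, mUT_smul, mUT_add,
    mUT_mul, Matrix.add_apply, Matrix.neg_apply, Matrix.smul_apply, smul_eq_mul] at h
  simpa using h

theorem stmt14 (q : ℂ) (hq : q ≠ 0) (hq' : ∀ n : ℕ, 0 < n → q ^ n ≠ 1)
    (E3 : Uqsl3 q) (hE3 : E3 = -(E₁ q * E₂ q) + q⁻¹ • (E₂ q * E₁ q))
    (σ : Uqsl3 q ≃ₐ[ℂ] Uqsl3 q) (a1 a2 b1 b2 lam : ℂ) (hlam : lam ≠ 0)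
    (hσ1 : σ (E₁ q) = a1 • E₁ q + a2 • E₂ q)
    (hσ2 : σ (E₂ q) = b1 • E₁ q + b2 • E₂ q)
    (hσ3 : σ E3 = lam • E3) :
    a2 = 0 ∧ b1 = 0 ∧ a1 ≠ 0 ∧ b2 ≠ 0 := by
  have key : -((a1 • E₁ q + a2 • E₂ q) * (b1 • E₁ q + b2 • E₂ q))
        + q⁻¹ • ((b1 • E₁ q + b2 • E₂ q) * (a1 • E₁ q + a2 • E₂ q))
        = lam • (-(E₁ q * E₂ q) + q⁻¹ • (E₂ q * E₁ q)) := by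
    rw [← hσ1, ← hσ2, ← map_mul, ← map_mul, ← map_smul, ← map_neg, ← map_add, ← hE3, hσ3, hE3]
  have hA := detect q 1 1 0 0 a1 a2 b1 b2 lam key
  have hB := detect q 0 0 1 1 a1 a2 b1 b2 lam key
  have hC := detect q 1 0 0 1 a1 a2 b1 b2 lam key
  have hD := detect q 0 1 1 0 a1 a2 b1 b2 lam key
  ring_nf at hA hB hC hD
  have hq1 : q ≠ 1 := by simpa using hq' 1 one_pos
  have hq2 : q ^ 2 ≠ 1 := hq' 2 two_pos
  field_simp at hA hB hC hD
  have hy : a2 * b1 = 0 := by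
    have h : (1 - q ^ 2) * (a2 * b1) = 0 := by linear_combination hC + q * hD
    rcases mul_eq_zero.mp h with h | h
    · exact absurd (by linear_combination -h) hq2
    · exact h
  have hx : a1 * b2 = lam := by linear_combination hD + q * hy
  have ha1 : a1 ≠ 0 := by
    intro h; exact hlam (by rw [← hx, h, zero_mul])
  have hb2 : b2 ≠ 0 := by
    intro h; exact hlam (by rw [← hx, h, mul_zero])
  have hb1 : b1 = 0 := by
    have h : (a1 * b1) * (1 - q) = 0 := by linear_combination hA
    rcases mul_eq_zero.mp h with h | h
    · exact (mul_eq_zero.mp h).resolve_left ha1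
    · exact absurd (by linear_combination -h) hq1
  have ha2 : a2 = 0 := by
    have h : (a2 * b2) * (1 - q) = 0 := by linear_combination hB
    rcases mul_eq_zero.mp h with h | h
    · exact (mul_eq_zero.mp h).resolve_right hb2
    · exact absurd (by linear_combination -h) hq1
  exact ⟨ha2, hb1, ha1, hb2⟩
end
end
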